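/- Let ρ be a positive semidefinite trace-one operator with matrix entries ρ_{mn} (m,n ∈ ℕ) in an orthonormal basis, supported on indices ≤ E. Then for any k, l with 0 ≤ k,l ≤ E and any η with 0 < η ≤ 2/E, Σ_{s=1}^{E−max(k,l)} η^s·√(C(s+k,k)·C(s+l,l))·|ρ_{s+k,s+l}| ≤ η·√((k+1)(l+1)). -/

import Mathlib

/-!
Positive semidefiniteness bounds every entry by the geometric mean of the two diagonal entries
(a 2 × 2 principal minor is nonnegative), so after Cauchy–Schwarz it remains to bound
`∑ₛ ηˢ C(s+k,k) ρ_{s+k,s+k}` by `η (k+1)`. Passing from `s` to `s+1` multiplies the weight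
`ηˢ C(s+k,k)` by `η (s+k+1)/(s+1) ≤ ηE/(s+1) ≤ 2/(s+1) ≤ 1`, so every weight is at most the first one,
`η (k+1)`, and the diagonal entries sum to the trace `1`.
-/

open ComplexOrder

open Finset

namespace Matrix.PosSemidef

variable {n 𝕜 : Type*} [RCLike 𝕜] {M : Matrix n n 𝕜}

theorem norm_apply_le_sqrt_mul_sqrt (hM : M.PosSemidef) (i j : n) :
    ‖M i j‖ ≤ √‖M i i‖ * √‖M j j‖ := by
  have hdiag (i : n) : ((‖M i i‖ : ℝ) : 𝕜) = M i i := RCLike.norm_of_nonneg' hM.diag_nonneg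
  have hminor : 0 ≤ M i i * M j j - M i j * star (M i j) := by
    have := (hM.submatrix ![i, j]).det_nonneg
    rw [det_fin_two] at this
    simpa [← hM.isHermitian.apply i j] using this
  rw [← hdiag i, ← hdiag j, RCLike.star_def, RCLike.mul_conj, ← RCLike.ofReal_pow,
    ← RCLike.ofReal_mul, ← RCLike.ofReal_sub, RCLike.ofReal_nonneg, sub_nonneg] at hminor
  rw [← Real.sqrt_mul (norm_nonneg _)]
  exact Real.le_sqrt_of_sq_le hminor

theorem sum_norm_diag [Fintype n] (hM : M.PosSemidef) : ∑ i, ‖M i i‖ = ‖M.trace‖ := by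
  have hdiag (i : n) : ((‖M i i‖ : ℝ) : 𝕜) = M i i := RCLike.norm_of_nonneg' hM.diag_nonneg
  have htrace : M.trace = ((∑ i, ‖M i i‖ : ℝ) : 𝕜) := by
    rw [RCLike.ofReal_sum]
    exact sum_congr rfl fun i _ => (hdiag i).symm
  rw [htrace, RCLike.norm_of_nonneg (sum_nonneg fun _ _ => norm_nonneg _)]

end Matrix.PosSemidef

theorem pow_mul_choose_le {η : ℝ} (hη : 0 ≤ η) {k s : ℕ} (hs : 1 ≤ s)
    (h : η * (s + k) ≤ 2) : η ^ s * (s + k).choose k ≤ η * (k + 1) := by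
  induction s, hs using Nat.le_induction with
  | base => simp [add_comm 1 k, Nat.choose_succ_self_right]
  | succ s hs ih =>
    push_cast at h
    have hchoose : ((s + 1 + k).choose k : ℝ) * (s + 1) = (s + k).choose k * (s + 1 + k) := by
      have := Nat.choose_mul_succ_eq (s + k) k
      rw [show s + k + 1 - k = s + 1 by omega, show s + k + 1 = s + 1 + k by omega] at this
      exact_mod_cast this.symm
    have hs2 : (2 : ℝ) ≤ s + 1 := by norm_cast; omega
    have hpos : (0 : ℝ) < s + 1 := by positivity
    refine le_of_mul_le_mul_right ?_ hpos
    calc η ^ (s + 1) * ((s + 1 + k).choose k : ℝ) * (s + 1)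
        = η ^ s * (s + k).choose k * (η * (s + 1 + k)) := by rw [mul_assoc, hchoose]; ring
      _ ≤ η * (k + 1) * 2 :=
        mul_le_mul (ih (by linarith)) h (by positivity) (by positivity)
      _ ≤ η * (k + 1) * (s + 1) := by gcongr

theorem mul_sqrt_mul_mul_le_sqrt_mul_sqrt {x a b c d y : ℝ} (hx : 0 ≤ x) (ha : 0 ≤ a)
    (hb : 0 ≤ b) (hy : y ≤ √c * √d) :
    x * √(a * b) * y ≤ √(x * a * c) * √(x * b * d) := by
  have hsplit : √(x * a * c) * √(x * b * d) = x * √(a * b) * (√c * √d) := by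
    rw [Real.sqrt_mul (by positivity) c, Real.sqrt_mul (by positivity) d, Real.sqrt_mul hx,
      Real.sqrt_mul hx, Real.sqrt_mul ha]
    linear_combination √a * √b * √c * √d * Real.mul_self_sqrt hx
  rw [hsplit]
  gcongr

theorem sum_pow_mul_choose_mul_le {η : ℝ} (hη : 0 ≤ η) {k N E : ℕ} (hN : N + k ≤ E)
    (hηE : η * E ≤ 2) {r : ℕ → ℝ} (hr : ∀ m, 0 ≤ r m) :
    ∑ s ∈ Icc 1 N, η ^ s * (s + k).choose k * r (s + k) ≤
      η * (k + 1) * ∑ m ∈ range (E + 1), r m := by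
  calc ∑ s ∈ Icc 1 N, η ^ s * (s + k).choose k * r (s + k)
      ≤ ∑ s ∈ Icc 1 N, η * (k + 1) * r (s + k) := by
        refine sum_le_sum fun s hs => mul_le_mul_of_nonneg_right ?_ (hr _)
        obtain ⟨hs1, hsN⟩ := mem_Icc.1 hs
        refine pow_mul_choose_le hη hs1 (le_trans ?_ hηE)
        gcongr
        exact_mod_cast (by omega : s + k ≤ E)
    _ = η * (k + 1) * ∑ m ∈ (Icc 1 N).map (addRightEmbedding k), r m := by
        rw [mul_sum, sum_map]; rfl
    _ ≤ η * (k + 1) * ∑ m ∈ range (E + 1), r m := by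
        refine mul_le_mul_of_nonneg_left (sum_le_sum_of_subset_of_nonneg ?_ fun m _ _ => hr m)
          (by positivity)
        intro m hm
        simp only [mem_map, mem_Icc, addRightEmbedding_apply] at hm
        obtain ⟨s, ⟨_, hsN⟩, rfl⟩ := hm
        exact mem_range.2 (by omega)

theorem sum_eta_pow_sqrt_choose_abs_entry_le_general (E : ℕ)
    (ρ : ℕ → ℕ → ℂ)
    (hpsd : (Matrix.of (fun i j : Fin (E + 1) => ρ i j)).PosSemidef)
    (htr : (Matrix.of (fun i j : Fin (E + 1) => ρ i j)).trace = 1)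
    (k l : ℕ) (hk : k ≤ E) (hl : l ≤ E)
    (η : ℝ) (hη : 0 < η) (hη2 : η ≤ 2 / E) :
    ∑ s ∈ Finset.Icc 1 (E - max k l),
        η ^ s * Real.sqrt (((s + k).choose k : ℝ) * ((s + l).choose l : ℝ)) *
          ‖ρ (s + k) (s + l)‖ ≤
      η * Real.sqrt (((k : ℝ) + 1) * ((l : ℝ) + 1)) := by
  set r : ℕ → ℝ := fun m => ‖ρ m m‖
  have hr_sum : ∑ m ∈ range (E + 1), r m = 1 := by
    simpa [htr, Fin.sum_univ_eq_sum_range (fun m => ‖ρ m m‖)] using hpsd.sum_norm_diag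
  have hentry {m n : ℕ} (hm : m ≤ E) (hn : n ≤ E) : ‖ρ m n‖ ≤ √(r m) * √(r n) :=
    hpsd.norm_apply_le_sqrt_mul_sqrt ⟨m, by omega⟩ ⟨n, by omega⟩
  have hηE : η * E ≤ 2 := mul_le_of_le_div₀ zero_le_two E.cast_nonneg hη2
  have hweighted {a : ℕ} (ha : a ≤ max k l) :
      ∑ s ∈ Icc 1 (E - max k l), η ^ s * (s + a).choose a * r (s + a) ≤ η * (a + 1) := by
    have hN : E - max k l + a ≤ E := by omega
    have := sum_pow_mul_choose_mul_le (r := r) hη.le hN hηE fun m => norm_nonneg _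
    rwa [hr_sum, mul_one] at this
  calc ∑ s ∈ Icc 1 (E - max k l),
        η ^ s * √(((s + k).choose k : ℝ) * (s + l).choose l) * ‖ρ (s + k) (s + l)‖
      ≤ ∑ s ∈ Icc 1 (E - max k l), √(η ^ s * (s + k).choose k * r (s + k)) *
          √(η ^ s * (s + l).choose l * r (s + l)) := by
        refine sum_le_sum fun s hs => ?_
        have hs := mem_Icc.1 hs
        exact mul_sqrt_mul_mul_le_sqrt_mul_sqrt (by positivity) (by positivity) (by positivity)
          (hentry (by omega) (by omega))
    _ ≤ √(∑ s ∈ Icc 1 (E - max k l), η ^ s * (s + k).choose k * r (s + k)) *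
          √(∑ s ∈ Icc 1 (E - max k l), η ^ s * (s + l).choose l * r (s + l)) :=
        Real.sum_sqrt_mul_sqrt_le _ (fun _ => by positivity) (fun _ => by positivity)
    _ ≤ √(η * (k + 1)) * √(η * (l + 1)) := by
        gcongr
        exacts [hweighted (le_max_left k l), hweighted (le_max_right k l)]
    _ = η * √((k + 1) * (l + 1)) := by
        rw [← Real.sqrt_mul (by positivity), mul_mul_mul_comm, Real.sqrt_mul (by positivity),
          Real.sqrt_mul_self hη.le]

theorem sum_eta_pow_sqrt_choose_abs_entry_le (E : ℕ) (hE : 1 ≤ E)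
    (ρ : ℕ → ℕ → ℂ)
    (hpsd : (Matrix.of (fun i j : Fin (E + 1) => ρ i j)).PosSemidef)
    (htr : (Matrix.of (fun i j : Fin (E + 1) => ρ i j)).trace = 1)
    (hsupp : ∀ m n : ℕ, E < m ∨ E < n → ρ m n = 0)
    (k l : ℕ) (hk : k ≤ E) (hl : l ≤ E)
    (η : ℝ) (hη : 0 < η) (hη2 : η ≤ 2 / E) :
    ∑ s ∈ Finset.Icc 1 (E - max k l),
        η ^ s * Real.sqrt (((s + k).choose k : ℝ) * ((s + l).choose l : ℝ)) *
          ‖ρ (s + k) (s + l)‖ ≤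
      η * Real.sqrt (((k : ℝ) + 1) * ((l : ℝ) + 1)) :=
  sum_eta_pow_sqrt_choose_abs_entry_le_general E ρ hpsd htr k l hk hl η hη hη2
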